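/- Let q be an odd prime power and let C be an [n,k] linear code over F_q of type (E_{o,ns}), with ℓ = dim Hull_E(C) and ℓ < t ≤ k − 1. Then the length of the shortest t-dimensional Euclidean hull embeddings of C is n + t − ℓ. -/

import Mathlib

open Matrix

/-- The Euclidean dual of a code `C` in `F^ι`. -/
def dualE {F : Type*} [Field F] {ι : Type*} [Fintype ι]
    (C : Submodule F (ι → F)) : Submodule F (ι → F) where
  carrier := {v | ∀ u ∈ C, u ⬝ᵥ v = 0}
  add_mem' := fun {a b} ha hb u hu => by
    rw [dotProduct_add, ha u hu, hb u hu, add_zero]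
  zero_mem' := fun u _ => dotProduct_zero u
  smul_mem' := fun c a ha u hu => by
    rw [dotProduct_smul, ha u hu, smul_zero]

/-- The Euclidean hull of a code: `Hull_E(C) = C ⊓ C^{⊥_E}`. -/
def hullE {F : Type*} [Field F] {ι : Type*} [Fintype ι]
    (C : Submodule F (ι → F)) : Submodule F (ι → F) :=
  C ⊓ dualE C

/-- `G` is a generator matrix of the code `C`: its rows form a basis of `C`. -/
def IsGenMat {F : Type*} [Field F] {κ ι : Type*}
    (C : Submodule F (ι → F)) (G : Matrix κ ι F) : Prop :=
  LinearIndependent F (fun i => G i) ∧ Submodule.span F (Set.range fun i => G i) = C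

/-- `Ct` (a code of length `n + |ι|`) is a `t`-dimensional Euclidean hull embedding of the
`[n,k]` code `C`: `dim Hull_E(Ct) = t` and `Ct` has a generator matrix `[G | D]` where
`G` is a generator matrix of `C`. -/
def IsHullEmbE {F : Type*} [Field F] {n : ℕ} (k : ℕ) {ι : Type*} [Fintype ι]
    (C : Submodule F (Fin n → F)) (Ct : Submodule F ((Fin n ⊕ ι) → F)) (t : ℕ) : Prop :=
  Module.finrank F (hullE Ct) = t ∧
  ∃ (G : Matrix (Fin k) (Fin n) F) (D : Matrix (Fin k) ι F),
    IsGenMat C G ∧ IsGenMat Ct (Matrix.fromCols G D)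

/-- Two square matrices are congruent if `D * A * Dᵀ = B` for some invertible `D`. -/
def MatCongruent {F : Type*} [Field F] {k : ℕ} (A B : Matrix (Fin k) (Fin k) F) : Prop :=
  ∃ D : Matrix (Fin k) (Fin k) F, IsUnit D ∧ D * A * Dᵀ = B

section Aux

variable {F : Type*} [Field F]

lemma mem_dualE {ι : Type*} [Fintype ι] {C : Submodule F (ι → F)} {v : ι → F} :
    v ∈ dualE C ↔ ∀ u ∈ C, u ⬝ᵥ v = 0 := Iff.rfl

lemma hullE_eq_map {k : ℕ} {ι : Type*} [Fintype ι]
    (C : Submodule F (ι → F)) (G : Matrix (Fin k) ι F) (hG : IsGenMat C G) :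
    hullE C = Submodule.map (Matrix.vecMulLinear G)
      (LinearMap.ker (Matrix.mulVecLin (G * Gᵀ))) := by
  obtain ⟨hli, hspan⟩ := hG
  have hrange : LinearMap.range G.vecMulLinear = C := by
    rw [range_vecMulLinear]; exact hspan
  ext v
  constructor
  · rintro ⟨hvC, hvD⟩
    have hv : v ∈ LinearMap.range G.vecMulLinear := hrange ▸ hvC
    obtain ⟨x, rfl⟩ := hv
    refine ⟨x, ?_, rfl⟩
    simp only [SetLike.mem_coe, LinearMap.mem_ker, Matrix.mulVecLin_apply,
      ← Matrix.mulVec_mulVec, Matrix.mulVec_transpose]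
    ext i
    exact hvD (G i) (hspan ▸ Submodule.subset_span ⟨i, rfl⟩)
  · rintro ⟨x, hx, rfl⟩
    refine ⟨hrange ▸ LinearMap.mem_range_self _ x, ?_⟩
    intro u hu
    rw [← hrange] at hu
    obtain ⟨y, rfl⟩ := hu
    simp only [SetLike.mem_coe, LinearMap.mem_ker, Matrix.mulVecLin_apply] at hx
    rw [Matrix.vecMulLinear_apply, Matrix.vecMulLinear_apply, ← Matrix.dotProduct_mulVec,
      ← Matrix.mulVec_transpose G x, Matrix.mulVec_mulVec, hx, dotProduct_zero]

lemma finrank_hullE_add_rank {k : ℕ} {ι : Type*} [Fintype ι]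
    (C : Submodule F (ι → F)) (G : Matrix (Fin k) ι F) (hG : IsGenMat C G) :
    Module.finrank F (hullE C) + (G * Gᵀ).rank = k := by
  classical
  rw [hullE_eq_map C G hG]
  have hinj : Function.Injective G.vecMulLinear := by
    rw [show (G.vecMulLinear : _ → _) = G.vecMul from rfl]
    exact Matrix.vecMul_injective_iff.mpr hG.1
  have h1 : Module.finrank F (Submodule.map G.vecMulLinear
      (LinearMap.ker (G * Gᵀ).mulVecLin)) =
      Module.finrank F (LinearMap.ker (G * Gᵀ).mulVecLin) :=
    (LinearEquiv.finrank_eq (Submodule.equivMapOfInjective _ hinj _)).symm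
  rw [h1, Matrix.rank, add_comm, LinearMap.finrank_range_add_finrank_ker,
    Module.finrank_fin_fun]

lemma matrix_rank_add_le {m n' : Type*} [Fintype m] [Fintype n'] (A B : Matrix m n' F) :
    (A + B).rank ≤ A.rank + B.rank := by
  classical
  have hle : LinearMap.range (A + B).mulVecLin ≤
      LinearMap.range A.mulVecLin ⊔ LinearMap.range B.mulVecLin := by
    rintro v ⟨x, rfl⟩
    rw [Matrix.mulVecLin_add]
    exact Submodule.add_mem_sup (LinearMap.mem_range_self _ x) (LinearMap.mem_range_self _ x)
  calc (A + B).rank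
      ≤ Module.finrank F ↥(LinearMap.range A.mulVecLin ⊔ LinearMap.range B.mulVecLin) :=
        Submodule.finrank_mono hle
    _ ≤ A.rank + B.rank := Submodule.finrank_add_le_finrank_add_finrank _ _

lemma li_fromColumns {n s k : ℕ} (G : Matrix (Fin k) (Fin n) F)
    (D : Matrix (Fin k) (Fin s) F) (h : LinearIndependent F (fun i => G i)) :
    LinearIndependent F (fun i => Matrix.fromCols G D i) := by
  apply LinearIndependent.of_comp (LinearMap.funLeft F F Sum.inl)
  have : (LinearMap.funLeft F F Sum.inl) ∘ (fun i => Matrix.fromCols G D i)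
      = fun i => G i := by
    ext i j; rfl
  rw [this]; exact h

lemma conj_add_mul {k s : ℕ} (P A : Matrix (Fin k) (Fin k) F) (D : Matrix (Fin k) (Fin s) F) :
    P * (A + D * Dᵀ) * Pᵀ = P * A * Pᵀ + (P * D) * (P * D)ᵀ := by
  rw [Matrix.transpose_mul, Matrix.mul_add, Matrix.add_mul]
  simp [Matrix.mul_assoc]

end Aux

/-- Let `q` be an odd prime power and `C` an `[n,k]` code over `F_q`
of type `(E_{o,ns})`, i.e. `-G * Gᵀ` is congruent to `diag(I_{r-1}, z, 0, …, 0)` for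
some nonsquare `z ∈ F_q^*`, where `r = rank (G * Gᵀ)` and `G` is a generator matrix of
`C`.  If `ℓ = dim Hull_E(C)` and `ℓ < t ≤ k - 1`, then the length of the shortest
`t`-dimensional Euclidean hull embeddings of `C` is `n + t - ℓ`. -/
theorem shortest_type_Eons_of_lt {F : Type*} [Field F] [Fintype F]
    (hodd : Odd (Fintype.card F))
    {n k ℓ t : ℕ} (C : Submodule F (Fin n → F)) (hk : Module.finrank F C = k)
    (G : Matrix (Fin k) (Fin n) F) (hG : IsGenMat C G)
    (htype : ∃ z : F, z ≠ 0 ∧ ¬ IsSquare z ∧ MatCongruent (-(G * Gᵀ))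
      (Matrix.of fun (i j : Fin k) =>
        if i = j then
          (if (i : ℕ) + 1 < (G * Gᵀ).rank then (1 : F)
           else if (i : ℕ) + 1 = (G * Gᵀ).rank then z else 0)
        else 0))
    (hℓ : Module.finrank F (hullE C) = ℓ) (ht1 : ℓ < t) (ht2 : t ≤ k - 1) :
    IsLeast {s : ℕ | ∃ Ct : Submodule F ((Fin n ⊕ Fin s) → F), IsHullEmbE k C Ct t}
      (t - ℓ) := by
  classical
  obtain ⟨z, hz0, -, P, hPu, hPeq⟩ := htype
  have hfr := finrank_hullE_add_rank C G hG
  rw [hℓ] at hfr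
  set r := (G * Gᵀ).rank with hrdef
  have hk1 : 1 ≤ k := by omega
  have hsr : (t - ℓ) + 1 ≤ r := by omega
  have hrk : r ≤ k := by omega
  constructor
  · -- membership: construct an embedding of length t - ℓ
    show ∃ Ct : Submodule F ((Fin n ⊕ Fin (t - ℓ)) → F), IsHullEmbE k C Ct t
    set s := t - ℓ with hsdef
    have hsk : s < k := by omega
    set e : Fin s → Fin k := fun j => ⟨(j : ℕ), by omega⟩ with hedef
    set M : Matrix (Fin k) (Fin s) F :=
      Matrix.of fun i j => if i = e j then (1 : F) else 0 with hMdef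
    have hPdet : IsUnit P.det := (Matrix.isUnit_iff_isUnit_det P).mp hPu
    set D : Matrix (Fin k) (Fin s) F := P⁻¹ * M with hDdef
    have hPD : P * D = M := Matrix.mul_nonsing_inv_cancel_left P M hPdet
    set w : Fin k → F :=
      fun i => if (i : ℕ) + 1 < r then 1 else if (i : ℕ) + 1 = r then z else 0 with hwdef
    have hΔ : (Matrix.of fun (i j : Fin k) =>
        if i = j then
          (if (i : ℕ) + 1 < r then (1 : F) else if (i : ℕ) + 1 = r then z else 0)
        else 0) = Matrix.diagonal w := by
      ext i j
      by_cases h : i = j <;> simp [Matrix.diagonal_apply, h, hwdef]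
    rw [hΔ] at hPeq
    have hMM : M * Mᵀ =
        Matrix.diagonal (fun i : Fin k => if (i : ℕ) < s then (1 : F) else 0) := by
      ext i i'
      rw [Matrix.mul_apply]
      by_cases hi : (i : ℕ) < s
      · rw [Finset.sum_eq_single (⟨(i : ℕ), hi⟩ : Fin s)]
        · have he : e ⟨(i : ℕ), hi⟩ = i := by
            apply Fin.ext; simp [hedef]
          simp only [hMdef, Matrix.transpose_apply, Matrix.of_apply, he]
          rcases eq_or_ne i i' with rfl | hii
          · simp [Matrix.diagonal_apply, hi]
          · simp [Matrix.diagonal_apply, hii, Ne.symm hii]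
        · intro j _ hj
          have hij : i ≠ e j := by
            intro h
            apply hj
            apply Fin.ext
            simpa [hedef] using congrArg Fin.val h.symm
          simp [hMdef, hij]
        · simp
      · have hne : ∀ j : Fin s, i ≠ e j := by
          intro j h
          apply hi
          have := congrArg Fin.val h
          simp [hedef] at this
          omega
        simp [hMdef, hne, Matrix.diagonal_apply, hi]
    have h2 : P * (G * Gᵀ) * Pᵀ = -Matrix.diagonal w := by
      calc P * (G * Gᵀ) * Pᵀ = -(P * (-(G * Gᵀ)) * Pᵀ) := by
            simp [Matrix.mul_neg, Matrix.neg_mul]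
        _ = -Matrix.diagonal w := by rw [hPeq]
    have h3 : P * (G * Gᵀ + D * Dᵀ) * Pᵀ = P * (G * Gᵀ) * Pᵀ + (P * D) * (P * D)ᵀ :=
      conj_add_mul P (G * Gᵀ) D
    have hkey : P * (G * Gᵀ + D * Dᵀ) * Pᵀ =
        Matrix.diagonal (fun i : Fin k => (if (i : ℕ) < s then (1 : F) else 0) - w i) := by
      rw [h3, h2, hPD, hMM, neg_add_eq_sub, Matrix.diagonal_sub]
    have hPtdet : IsUnit Pᵀ.det := by rwa [Matrix.det_transpose]
    have hrank : (G * Gᵀ + D * Dᵀ).rank = r - s := by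
      have hc := congrArg Matrix.rank hkey
      rw [Matrix.rank_mul_eq_left_of_isUnit_det Pᵀ (P * (G * Gᵀ + D * Dᵀ)) hPtdet,
        Matrix.rank_mul_eq_right_of_isUnit_det P (G * Gᵀ + D * Dᵀ) hPdet,
        Matrix.rank_diagonal] at hc
      rw [hc]
      have hiff : ∀ i : Fin k,
          ((if (i : ℕ) < s then (1 : F) else 0) - w i ≠ 0) ↔
            (s ≤ (i : ℕ) ∧ (i : ℕ) < r) := by
        intro i
        by_cases hi : (i : ℕ) < s
        · have h1 : (i : ℕ) + 1 < r := by omega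
          simp only [hwdef, hi, if_pos, h1, sub_self, ne_eq, not_true_eq_false, false_iff,
            not_and]
          omega
        · by_cases hv2 : (i : ℕ) + 1 < r
          · simp only [hwdef, hi, if_neg, if_pos hv2, zero_sub, ne_eq, neg_eq_zero,
              one_ne_zero, not_false_eq_true, true_iff]
            omega
          · by_cases hv3 : (i : ℕ) + 1 = r
            · simp only [hwdef, hi, if_neg, hv2, if_false, if_pos hv3, zero_sub, ne_eq,
                neg_eq_zero, hz0, not_false_eq_true, true_iff]
              omega
            · simp only [hwdef, hi, if_neg, hv2, hv3, if_false, sub_zero, ne_eq,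
                not_true_eq_false, false_iff, not_and]
              omega
      rw [Fintype.card_congr (Equiv.subtypeEquivRight hiff)]
      have heq : Fintype.card {i : Fin k // s ≤ (i : ℕ) ∧ (i : ℕ) < r} =
          Fintype.card (Fin (r - s)) := by
        apply Fintype.card_congr
        refine ⟨fun x => ⟨(x.1 : ℕ) - s, by obtain ⟨h1, h2⟩ := x.2; omega⟩,
          fun y => ⟨⟨(y : ℕ) + s, by have := y.2; omega⟩, by
            refine ⟨by simp, ?_⟩
            have := y.2
            simp
            omega⟩, ?_, ?_⟩
        · intro x
          apply Subtype.ext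
          apply Fin.ext
          obtain ⟨h1, h2⟩ := x.2
          simp
          omega
        · intro y
          apply Fin.ext
          simp
      rw [heq, Fintype.card_fin]
    have hgen : IsGenMat
        (Submodule.span F (Set.range fun i => Matrix.fromCols G D i))
        (Matrix.fromCols G D) := ⟨li_fromColumns G D hG.1, rfl⟩
    have h4 := finrank_hullE_add_rank
      (Submodule.span F (Set.range fun i => Matrix.fromCols G D i))
      (Matrix.fromCols G D) hgen
    rw [Matrix.transpose_fromCols, Matrix.fromCols_mul_fromRows, hrank] at h4
    exact ⟨Submodule.span F (Set.range fun i => Matrix.fromCols G D i),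
      by omega, G, D, hG, hgen⟩
  · -- lower bound
    rintro s' ⟨Ct, hdim, G₀, D, hG₀, hGt⟩
    have h1 := finrank_hullE_add_rank C G₀ hG₀
    rw [hℓ] at h1
    have h2 := finrank_hullE_add_rank Ct (Matrix.fromCols G₀ D) hGt
    rw [hdim, Matrix.transpose_fromCols, Matrix.fromCols_mul_fromRows] at h2
    have h3 : G₀ * G₀ᵀ = (G₀ * G₀ᵀ + D * Dᵀ) + (-D) * Dᵀ := by
      rw [Matrix.neg_mul]; abel
    have h4 : (G₀ * G₀ᵀ).rank ≤ (G₀ * G₀ᵀ + D * Dᵀ).rank + s' := by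
      have h5 : ((-D) * Dᵀ).rank ≤ s' :=
        le_trans (Matrix.rank_mul_le_left _ _)
          (by simpa using Matrix.rank_le_card_width (-D))
      calc (G₀ * G₀ᵀ).rank = ((G₀ * G₀ᵀ + D * Dᵀ) + (-D) * Dᵀ).rank := by rw [← h3]
        _ ≤ (G₀ * G₀ᵀ + D * Dᵀ).rank + ((-D) * Dᵀ).rank := matrix_rank_add_le _ _
        _ ≤ (G₀ * G₀ᵀ + D * Dᵀ).rank + s' := by omega
    omega
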